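/- Let U ~ L_k(m,Σ) with nonsingular Σ and density f_U, let f_{S_Δ(U)}(r) = ∫_{ℝ^k} f_U(u) 1_{ℍ_r}(u) dτ_r(u) be the density of S_Δ(U), and define the kernel μ_{U|S_Δ(U)}(A | r) = ∫_A (f_U(u)/f_{S_Δ(U)}(r)) 1_{ℍ_r}(u) dτ_r(u). Then μ_{U|S_Δ(U)} is a regular version of the conditional distribution of U given S_Δ(U): for all Borel A ⊆ ℝ^k and B ⊆ ℝ, P(U ∈ A, S_Δ(U) ∈ B) = ∫_B μ_{U|S_Δ(U)}(A | r) dμ_{S_Δ(U)}(r); moreover μ_{U|S_Δ(U)}(ℍ_r | r) = 1 for every r > 0. -/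

import Mathlib

open MeasureTheory ENNReal Set Matrix

noncomputable section

def stepLen {k : ℕ} (t : Fin (k + 1) → ℝ) (i : Fin k) : ℝ :=
  t i.succ - t i.castSucc

def Sdelta {k : ℕ} (t : Fin (k + 1) → ℝ) (u : Fin k → ℝ) : ℝ :=
  ∑ i, stepLen t i * u i

def Hset {k : ℕ} (t : Fin (k + 1) → ℝ) (r : ℝ) : Set (Fin k → ℝ) :=
  {v | (∀ i, 0 < v i) ∧ Sdelta t v = r}

def posOrthant (k : ℕ) : Set (Fin k → ℝ) :=
  {v | ∀ i, 0 < v i}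

def projFirst {k : ℕ} (v : Fin k → ℝ) (i : Fin (k - 1)) : ℝ :=
  v (Fin.castLE (Nat.sub_le k 1) i)

def dLast {k : ℕ} (hk : 0 < k) (t : Fin (k + 1) → ℝ) : ℝ :=
  stepLen t ⟨k - 1, Nat.sub_lt hk one_pos⟩

/-- The lognormal density `f_U` of `U ~ L_k(m, Σ)` with respect to `λ_k`:
`f_U(u) = (2π)^{-k/2} |Σ|^{-1/2} (∏ u_i⁻¹) exp(-½ (log u - m)ᵀ Sig⁻¹ (log u - m)) 1_{ℝ^k_+}(u)`. -/
def logNormalDensity {k : ℕ} (m : Fin k → ℝ) (Sig : Matrix (Fin k) (Fin k) ℝ)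
    (u : Fin k → ℝ) : ℝ :=
  (posOrthant k).indicator
    (fun u =>
      (2 * Real.pi) ^ (-(k : ℝ) / 2) * Sig.det ^ (-(1 : ℝ) / 2) * (∏ i, (u i)⁻¹) *
        Real.exp (-(1 / 2) *
          (((fun i => Real.log (u i)) - m) ⬝ᵥ (Sig⁻¹ *ᵥ ((fun i => Real.log (u i)) - m))))) u


/-- `f_{S_Δ(U)}(r) = ∫ f_U 1_{ℍ_r} dτ_r`, the density of `S_Δ(U)`. -/
def sDensity {k : ℕ} (t : Fin (k + 1) → ℝ) (m : Fin k → ℝ)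
    (Sig : Matrix (Fin k) (Fin k) ℝ) (τ : ℝ → Measure (Fin k → ℝ)) (r : ℝ) : ℝ≥0∞ :=
  ∫⁻ u, ENNReal.ofReal (logNormalDensity m Sig u) * (Hset t r).indicator 1 u ∂(τ r)

/-- The kernel `μ_{U∣S_Δ(U)}(· ∣ r) = ∫_· (f_U / f_{S_Δ(U)}(r)) 1_{ℍ_r} dτ_r`. -/
def condLaw {k : ℕ} (t : Fin (k + 1) → ℝ) (m : Fin k → ℝ)
    (Sig : Matrix (Fin k) (Fin k) ℝ) (τ : ℝ → Measure (Fin k → ℝ)) (r : ℝ) :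
    Measure (Fin k → ℝ) :=
  (τ r).withDensity fun u =>
    (ENNReal.ofReal (logNormalDensity m Sig u) / sDensity t m Sig τ r) *
      (Hset t r).indicator 1 u

/-!
The chart `w ↦ (w, (r - ∑_{i<k} d_i w_i) / d_k)` inverts the projection `π` on the hyperplane
`S_Δ = r`, so `τ_r` is `d_k⁻¹` times the image of Lebesgue measure under the chart, restricted to
`ℝ^k_+`. Fubini and the substitution `x ↦ d_k x + ∑_{i<k} d_i w_i` in the last coordinate
disintegrate Lebesgue measure along the level sets of `S_Δ`: `∫ h = d_k⁻¹ ∫ ∫ h(chart_r w) dw dr`.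
Applied to `f_U 1_A 1_{S_Δ ∈ B}` this gives `P(U ∈ A, S_Δ(U) ∈ B) = ∫_B ν_r(A) dr` for
`ν_r = f_U 1_{ℍ_r} τ_r`; hence `S_Δ(U)` has density `r ↦ ν_r(ℝ^k) = f_{S_Δ(U)}(r)` and the kernel
is `ν_r / ν_r(ℝ^k)`. The normaliser is finite because `f_U` is bounded (complete the square in
`log u`) and the slice of `ℝ^k_+` is bounded, and it is positive for `r > 0` because `f_U > 0` on
the nonempty open slice.
-/

lemma isOpen_posOrthant (k : ℕ) : IsOpen (posOrthant k) := by
  simpa [posOrthant, Set.ofPred_forall] using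
    isOpen_iInter_of_finite fun i : Fin k => isOpen_lt continuous_const (continuous_apply i)

lemma stepLen_pos {k : ℕ} {t : Fin (k + 1) → ℝ} (ht : StrictMono t) (i : Fin k) :
    0 < stepLen t i :=
  sub_pos.mpr (ht i.castSucc_lt_succ)

lemma measurable_Sdelta {k : ℕ} (t : Fin (k + 1) → ℝ) : Measurable (Sdelta t) := by
  unfold Sdelta
  fun_prop

lemma measurableSet_Hset {k : ℕ} (t : Fin (k + 1) → ℝ) (r : ℝ) : MeasurableSet (Hset t r) :=
  (isOpen_posOrthant k).measurableSet.inter (measurable_Sdelta t (measurableSet_singleton r))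

lemma le_sum_mul_div {ι : Type*} [Fintype ι] {d u : ι → ℝ} (hd : ∀ i, 0 < d i)
    (hu : ∀ i, 0 ≤ u i) (i : ι) : u i ≤ (∑ j, d j * u j) / d i := by
  rw [le_div_iff₀' (hd i)]
  exact Finset.single_le_sum (fun j _ => mul_nonneg (hd j).le (hu j)) (Finset.mem_univ i)

lemma lintegral_comp_mul_add {c : ℝ} (hc : c ≠ 0) (b : ℝ) {φ : ℝ → ℝ≥0∞} (hφ : Measurable φ) :
    ∫⁻ x, φ (c * x + b) = ENNReal.ofReal |c⁻¹| * ∫⁻ r, φ r := by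
  have hmap : volume.map (fun x : ℝ => c * x + b) = ENNReal.ofReal |c⁻¹| • volume := by
    rw [show (fun x : ℝ => c * x + b) = (· + b) ∘ (c * ·) from rfl,
      ← Measure.map_map (measurable_add_const b) (measurable_const_mul c),
      Real.map_volume_mul_left hc, Measure.map_smul, map_add_right_eq_self]
  rw [← lintegral_map hφ ((measurable_const_mul c).add_const b), hmap, lintegral_smul_measure,
    smul_eq_mul]

lemma lintegral_eq_lintegral_lintegral_snoc {n : ℕ} {h : (Fin (n + 1) → ℝ) → ℝ≥0∞}
    (hh : Measurable h) :
    ∫⁻ v, h v = ∫⁻ w : Fin n → ℝ, ∫⁻ x : ℝ, h (Fin.snoc w x) := by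
  have hsnoc : ∀ p : ℝ × (Fin n → ℝ),
      (MeasurableEquiv.piFinSuccAbove (fun _ => ℝ) (Fin.last n)).symm p = Fin.snoc p.2 p.1 :=
    fun p => Fin.insertNth_last' _ _
  rw [← (volume_preserving_piFinSuccAbove (fun _ : Fin (n + 1) => ℝ) (Fin.last n)).symm
    |>.lintegral_comp hh]
  simp_rw [hsnoc]
  rw [Measure.volume_eq_prod, lintegral_prod_symm _ ?_]
  exact (hh.comp (by fun_prop)).aemeasurable

section HyperplaneChart

variable {n : ℕ} (d : Fin (n + 1) → ℝ)

def hyperplaneChart (r : ℝ) (w : Fin n → ℝ) : Fin (n + 1) → ℝ :=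
  Fin.snoc w ((r - ∑ i, d i.castSucc * w i) / d (Fin.last n))

lemma continuous_uncurry_hyperplaneChart : Continuous (Function.uncurry (hyperplaneChart d)) := by
  unfold hyperplaneChart
  fun_prop

lemma continuous_hyperplaneChart (r : ℝ) : Continuous (hyperplaneChart d r) :=
  (continuous_uncurry_hyperplaneChart d).comp (Continuous.prodMk_right r)

lemma init_hyperplaneChart (r : ℝ) (w : Fin n → ℝ) : Fin.init (hyperplaneChart d r w) = w :=
  Fin.init_snoc _ _

variable {d}

lemma sum_mul_hyperplaneChart (hd : d (Fin.last n) ≠ 0) (r : ℝ) (w : Fin n → ℝ) :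
    ∑ i, d i * hyperplaneChart d r w i = r := by
  simp only [hyperplaneChart, Fin.sum_univ_castSucc, Fin.snoc_castSucc, Fin.snoc_last]
  field_simp
  ring

lemma hyperplaneChart_init (hd : d (Fin.last n) ≠ 0) {r : ℝ} {v : Fin (n + 1) → ℝ}
    (hv : ∑ i, d i * v i = r) : hyperplaneChart d r (Fin.init v) = v := by
  rw [Fin.sum_univ_castSucc] at hv
  conv_rhs => rw [← Fin.snoc_init_self v]
  rw [hyperplaneChart, ← hv]
  congr 1
  field_simp
  simp [Fin.init]

lemma lintegral_eq_lintegral_hyperplaneChart (hd : d (Fin.last n) ≠ 0)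
    {h : (Fin (n + 1) → ℝ) → ℝ≥0∞} (hh : Measurable h) :
    ∫⁻ v, h v = ENNReal.ofReal |(d (Fin.last n))⁻¹| * ∫⁻ r, ∫⁻ w, h (hyperplaneChart d r w) := by
  have hmeas : Measurable fun p : ℝ × (Fin n → ℝ) => h (hyperplaneChart d p.1 p.2) :=
    hh.comp (continuous_uncurry_hyperplaneChart d).measurable
  have fibre (w : Fin n → ℝ) : ∫⁻ x, h (Fin.snoc w x) =
      ENNReal.ofReal |(d (Fin.last n))⁻¹| * ∫⁻ r, h (hyperplaneChart d r w) := by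
    have hslice : Measurable fun r => h (hyperplaneChart d r w) :=
      hmeas.comp (measurable_id.prodMk measurable_const)
    rw [← lintegral_comp_mul_add hd (∑ i, d i.castSucc * w i) hslice]
    congr with x
    simp only [hyperplaneChart, add_sub_cancel_right, mul_div_cancel_left₀ _ hd]
  rw [lintegral_eq_lintegral_lintegral_snoc hh]
  simp_rw [fibre]
  rw [lintegral_const_mul' _ _ ofReal_ne_top,
    lintegral_lintegral_swap (f := fun w r => h (hyperplaneChart d r w))
      (hmeas.comp measurable_swap).aemeasurable]

lemma setLIntegral_preimage_sum_mul (hd : d (Fin.last n) ≠ 0)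
    {h : (Fin (n + 1) → ℝ) → ℝ≥0∞} (hh : Measurable h) {B : Set ℝ} (hB : MeasurableSet B) :
    ∫⁻ v in (fun v => ∑ i, d i * v i) ⁻¹' B, h v =
      ENNReal.ofReal |(d (Fin.last n))⁻¹| * ∫⁻ r in B, ∫⁻ w, h (hyperplaneChart d r w) := by
  have hS : Measurable fun v : Fin (n + 1) → ℝ => ∑ i, d i * v i := by fun_prop
  rw [← lintegral_indicator (hS hB), lintegral_eq_lintegral_hyperplaneChart hd
    (hh.indicator (hS hB)), ← lintegral_indicator hB]
  congr 1
  refine lintegral_congr fun r => ?_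
  by_cases hr : r ∈ B <;> simp [indicator, sum_mul_hyperplaneChart hd, hr]

lemma measurable_lintegral_hyperplaneChart {h : (Fin (n + 1) → ℝ) → ℝ≥0∞} (hh : Measurable h) :
    Measurable fun r => ∫⁻ w, h (hyperplaneChart d r w) :=
  (hh.comp (continuous_uncurry_hyperplaneChart d).measurable).lintegral_prod_right'

lemma volume_hyperplaneChart_preimage_posOrthant_lt_top (hd : ∀ i, 0 < d i) (r : ℝ) :
    volume (hyperplaneChart d r ⁻¹' posOrthant (n + 1)) < ∞ := by
  have hsub : hyperplaneChart d r ⁻¹' posOrthant (n + 1) ⊆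
      univ.pi fun i => Icc 0 (r / d i.castSucc) := by
    intro w hw i _
    have hw_i : hyperplaneChart d r w i.castSucc = w i := Fin.snoc_castSucc ..
    refine ⟨hw_i ▸ (hw i.castSucc).le, ?_⟩
    calc w i = hyperplaneChart d r w i.castSucc := hw_i.symm
      _ ≤ (∑ j, d j * hyperplaneChart d r w j) / d i.castSucc :=
        le_sum_mul_div hd (fun j => (hw j).le) _
      _ = r / d i.castSucc := by rw [sum_mul_hyperplaneChart (hd (Fin.last n)).ne']
  exact (measure_mono hsub).trans_lt (isCompact_univ_pi fun _ => isCompact_Icc).measure_lt_top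

lemma hyperplaneChart_preimage_posOrthant_nonempty (hd : ∀ i, 0 < d i) {r : ℝ} (hr : 0 < r) :
    (hyperplaneChart d r ⁻¹' posOrthant (n + 1)).Nonempty := by
  have hsum : 0 < ∑ i, d i := Finset.sum_pos (fun i _ => hd i) Finset.univ_nonempty
  have hu : ∑ i, d i * (r / ∑ j, d j) = r := by
    rw [← Finset.sum_mul, mul_div_cancel₀ _ hsum.ne']
  refine ⟨Fin.init fun _ => r / ∑ j, d j, ?_⟩
  rw [mem_preimage, hyperplaneChart_init (hd (Fin.last n)).ne' hu]
  exact fun _ => div_pos hr hsum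

end HyperplaneChart

lemma dotProduct_mulVec_add_eq {ι : Type*} [Fintype ι] {M : Matrix ι ι ℝ} (hM : M.IsSymm)
    {a b : ι → ℝ} (hab : M *ᵥ a = b) (x : ι → ℝ) :
    (x + a) ⬝ᵥ (M *ᵥ (x + a)) = x ⬝ᵥ (M *ᵥ x) + 2 * (b ⬝ᵥ x) + b ⬝ᵥ a := by
  have hsymm : a ⬝ᵥ (M *ᵥ x) = b ⬝ᵥ x := by
    rw [dotProduct_mulVec, ← mulVec_transpose, hM.eq, hab]
  rw [mulVec_add, hab, add_dotProduct, dotProduct_add, dotProduct_add, hsymm,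
    dotProduct_comm x b, dotProduct_comm a b]
  ring

lemma measurable_logNormalDensity {k : ℕ} (m : Fin k → ℝ) (Sig : Matrix (Fin k) (Fin k) ℝ) :
    Measurable (logNormalDensity m Sig) := by
  unfold logNormalDensity
  refine Measurable.indicator ?_ (isOpen_posOrthant k).measurableSet
  simp only [dotProduct, mulVec]
  fun_prop

lemma logNormalDensity_of_notMem {k : ℕ} (m : Fin k → ℝ) (Sig : Matrix (Fin k) (Fin k) ℝ)
    {u : Fin k → ℝ} (hu : u ∉ posOrthant k) : logNormalDensity m Sig u = 0 :=
  indicator_of_notMem hu _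

lemma logNormalDensity_pos {k : ℕ} (m : Fin k → ℝ) {Sig : Matrix (Fin k) (Fin k) ℝ}
    (hSig : Sig.PosDef) {u : Fin k → ℝ} (hu : u ∈ posOrthant k) :
    0 < logNormalDensity m Sig u := by
  have hdet := hSig.det_pos
  have hprod : 0 < ∏ i, (u i)⁻¹ := Finset.prod_pos fun i _ => inv_pos.mpr (hu i)
  rw [logNormalDensity, indicator_of_mem hu]
  positivity

lemma logNormalDensity_le {k : ℕ} (m : Fin k → ℝ) {Sig : Matrix (Fin k) (Fin k) ℝ}
    (hSig : Sig.PosDef) : ∃ C, ∀ u, logNormalDensity m Sig u ≤ C := by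
  have hdet := hSig.det_pos
  set a := Sig *ᵥ 1
  have ha : Sig⁻¹ *ᵥ a = 1 := by
    rw [mulVec_mulVec, nonsing_inv_mul _ hdet.ne'.isUnit, one_mulVec]
  have hsymm : (Sig⁻¹).IsSymm := isHermitian_iff_isSymm.mp hSig.inv.isHermitian
  refine ⟨(2 * Real.pi) ^ (-(k : ℝ) / 2) * Sig.det ^ (-(1 : ℝ) / 2) *
    Real.exp (-∑ i, m i + 1 ⬝ᵥ a / 2), fun u => ?_⟩
  by_cases hu : u ∈ posOrthant k
  swap
  · rw [logNormalDensity_of_notMem m Sig hu]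
    positivity
  rw [logNormalDensity, indicator_of_mem hu]
  -- completing the square with `x = log u - m` and `Sig⁻¹ a = 1`:
  -- `-∑ log uᵢ - xᵀ Sig⁻¹ x / 2 = -∑ mᵢ + 1ᵀa / 2 - (x + a)ᵀ Sig⁻¹ (x + a) / 2`
  set x := (fun i => Real.log (u i)) - m
  have hprod : ∏ i, (u i)⁻¹ = Real.exp (-(1 ⬝ᵥ x) - ∑ i, m i) := by
    have hlog : -(1 ⬝ᵥ x) - ∑ i, m i = ∑ i, -Real.log (u i) := by
      simp [x, dotProduct, Finset.sum_sub_distrib]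
    rw [hlog, Real.exp_sum]
    exact Finset.prod_congr rfl fun i _ => by rw [Real.exp_neg, Real.exp_log (hu i)]
  have hsq := dotProduct_mulVec_add_eq hsymm ha x
  have hnn : 0 ≤ (x + a) ⬝ᵥ (Sig⁻¹ *ᵥ (x + a)) := by
    simpa using hSig.inv.posSemidef.dotProduct_mulVec_nonneg (x + a)
  rw [hprod, mul_assoc, ← Real.exp_add]
  refine mul_le_mul_of_nonneg_left (Real.exp_le_exp.mpr ?_) (by positivity)
  linarith

def IsSurfaceMeasure {n : ℕ} (t : Fin (n + 1 + 1) → ℝ) (τ : ℝ → Measure (Fin (n + 1) → ℝ)) :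
    Prop :=
  ∀ r A, MeasurableSet A →
    τ r A = ENNReal.ofReal (stepLen t (Fin.last n))⁻¹ * volume (projFirst '' (A ∩ Hset t r))

section Slices

variable {n : ℕ} {t : Fin (n + 1 + 1) → ℝ}

lemma image_projFirst_inter_Hset (hd : stepLen t (Fin.last n) ≠ 0) (A : Set (Fin (n + 1) → ℝ))
    (r : ℝ) :
    projFirst '' (A ∩ Hset t r) = hyperplaneChart (stepLen t) r ⁻¹' (A ∩ posOrthant (n + 1)) := by
  ext w
  constructor
  · rintro ⟨v, ⟨hvA, hvpos, hvr⟩, rfl⟩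
    change hyperplaneChart (stepLen t) r (Fin.init v) ∈ A ∩ posOrthant (n + 1)
    rw [hyperplaneChart_init hd hvr]
    exact ⟨hvA, hvpos⟩
  · rintro ⟨hA, hpos⟩
    exact ⟨_, ⟨hA, hpos, sum_mul_hyperplaneChart hd r w⟩, init_hyperplaneChart _ r w⟩

lemma IsSurfaceMeasure.eq_smul_restrict_map {τ : ℝ → Measure (Fin (n + 1) → ℝ)}
    (hτ : IsSurfaceMeasure t τ) (hd : stepLen t (Fin.last n) ≠ 0) (r : ℝ) :
    τ r = ENNReal.ofReal (stepLen t (Fin.last n))⁻¹ •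
      (volume.map (hyperplaneChart (stepLen t) r)).restrict (posOrthant (n + 1)) := by
  have hchart : Measurable (hyperplaneChart (stepLen t) r) :=
    (continuous_hyperplaneChart _ r).measurable
  ext A hA
  rw [hτ r A hA, image_projFirst_inter_Hset hd, Measure.smul_apply, smul_eq_mul,
    Measure.restrict_apply hA,
    Measure.map_apply hchart (hA.inter (isOpen_posOrthant _).measurableSet)]

def sliceLaw {k : ℕ} (t : Fin (k + 1) → ℝ) (m : Fin k → ℝ) (Sig : Matrix (Fin k) (Fin k) ℝ)
    (τ : ℝ → Measure (Fin k → ℝ)) (r : ℝ) : Measure (Fin k → ℝ) :=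
  (τ r).withDensity fun u => ENNReal.ofReal (logNormalDensity m Sig u) * (Hset t r).indicator 1 u

section SliceLaw

variable {k : ℕ} (t : Fin (k + 1) → ℝ) (m : Fin k → ℝ) (Sig : Matrix (Fin k) (Fin k) ℝ)
  (τ : ℝ → Measure (Fin k → ℝ)) (r : ℝ)

lemma measurable_sliceLaw_density :
    Measurable fun u => ENNReal.ofReal (logNormalDensity m Sig u) * (Hset t r).indicator 1 u :=
  (measurable_logNormalDensity m Sig).ennreal_ofReal.mul
    (measurable_one.indicator (measurableSet_Hset t r))

lemma sDensity_eq_sliceLaw_univ : sDensity t m Sig τ r = sliceLaw t m Sig τ r univ := by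
  rw [sliceLaw, withDensity_apply _ MeasurableSet.univ, Measure.restrict_univ, sDensity]

lemma sliceLaw_Hset : sliceLaw t m Sig τ r (Hset t r) = sDensity t m Sig τ r := by
  rw [sliceLaw, withDensity_apply _ (measurableSet_Hset t r), sDensity,
    setLIntegral_eq_of_support_subset]
  intro u hu
  by_contra hH
  exact hu (by simp [hH])

lemma condLaw_apply {A : Set (Fin k → ℝ)} (hA : MeasurableSet A) :
    condLaw t m Sig τ r A = sliceLaw t m Sig τ r A / sDensity t m Sig τ r := by
  rw [condLaw, sliceLaw, withDensity_apply _ hA, withDensity_apply _ hA, div_eq_mul_inv,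
    ← lintegral_mul_const _ (measurable_sliceLaw_density t m Sig r)]
  congr with u
  rw [div_eq_mul_inv]
  ring

end SliceLaw

section Disintegration

variable {n : ℕ} {t : Fin (n + 1 + 1) → ℝ} (m : Fin (n + 1) → ℝ)
  (Sig : Matrix (Fin (n + 1)) (Fin (n + 1)) ℝ) {τ : ℝ → Measure (Fin (n + 1) → ℝ)}

lemma sliceLaw_apply (hd : stepLen t (Fin.last n) ≠ 0) (hτ : IsSurfaceMeasure t τ) (r : ℝ)
    {A : Set (Fin (n + 1) → ℝ)} (hA : MeasurableSet A) :
    sliceLaw t m Sig τ r A = ENNReal.ofReal (stepLen t (Fin.last n))⁻¹ *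
      ∫⁻ w, A.indicator (fun u => ENNReal.ofReal (logNormalDensity m Sig u))
        (hyperplaneChart (stepLen t) r w) := by
  have hchart : Measurable (hyperplaneChart (stepLen t) r) :=
    (continuous_hyperplaneChart _ r).measurable
  have hpos := (isOpen_posOrthant (n + 1)).measurableSet
  rw [sliceLaw, withDensity_apply _ hA, hτ.eq_smul_restrict_map hd r,
    Measure.restrict_smul, lintegral_smul_measure, smul_eq_mul, Measure.restrict_restrict hA,
    setLIntegral_map (hA.inter hpos) (measurable_sliceLaw_density t m Sig r) hchart,
    ← lintegral_indicator (hchart (hA.inter hpos))]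
  congr 1
  refine lintegral_congr fun w => ?_
  by_cases hw : hyperplaneChart (stepLen t) r w ∈ posOrthant (n + 1)
  · have hH : hyperplaneChart (stepLen t) r w ∈ Hset t r := ⟨hw, sum_mul_hyperplaneChart hd r w⟩
    by_cases hwA : hyperplaneChart (stepLen t) r w ∈ A <;> simp [indicator, hw, hH, hwA]
  · simp [indicator, hw, logNormalDensity_of_notMem m Sig hw]

lemma measurable_sliceLaw_apply (hd : stepLen t (Fin.last n) ≠ 0) (hτ : IsSurfaceMeasure t τ)
    {A : Set (Fin (n + 1) → ℝ)} (hA : MeasurableSet A) :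
    Measurable fun r => sliceLaw t m Sig τ r A := by
  simp_rw [sliceLaw_apply m Sig hd hτ _ hA]
  exact (measurable_lintegral_hyperplaneChart
    ((measurable_logNormalDensity m Sig).ennreal_ofReal.indicator hA)).const_mul _

lemma withDensity_logNormalDensity_inter_preimage_Sdelta (hd : 0 < stepLen t (Fin.last n))
    (hτ : IsSurfaceMeasure t τ) {A : Set (Fin (n + 1) → ℝ)} {B : Set ℝ} (hA : MeasurableSet A)
    (hB : MeasurableSet B) :
    volume.withDensity (fun u => ENNReal.ofReal (logNormalDensity m Sig u)) (A ∩ Sdelta t ⁻¹' B) =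
      ∫⁻ r in B, sliceLaw t m Sig τ r A := by
  have hf := (measurable_logNormalDensity m Sig).ennreal_ofReal
  rw [withDensity_apply _ (hA.inter (measurable_Sdelta t hB)),
    ← Measure.restrict_restrict hA, ← lintegral_indicator hA,
    show Sdelta t = fun v => ∑ i, stepLen t i * v i from rfl,
    setLIntegral_preimage_sum_mul hd.ne' (hf.indicator hA) hB, abs_of_pos (inv_pos.mpr hd),
    ← lintegral_const_mul _ (measurable_lintegral_hyperplaneChart (hf.indicator hA))]
  exact setLIntegral_congr_fun hB fun r _ => (sliceLaw_apply m Sig hd.ne' hτ r hA).symm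

lemma map_Sdelta_withDensity_logNormalDensity (hd : 0 < stepLen t (Fin.last n))
    (hτ : IsSurfaceMeasure t τ) :
    (volume.withDensity fun u => ENNReal.ofReal (logNormalDensity m Sig u)).map (Sdelta t) =
      volume.withDensity (sDensity t m Sig τ) := by
  ext B hB
  rw [Measure.map_apply (measurable_Sdelta t) hB, withDensity_apply _ hB,
    ← univ_inter (Sdelta t ⁻¹' B),
    withDensity_logNormalDensity_inter_preimage_Sdelta m Sig hd hτ MeasurableSet.univ hB]
  simp_rw [sDensity_eq_sliceLaw_univ]

end Disintegration

section Normalizer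

variable {n : ℕ} {t : Fin (n + 1 + 1) → ℝ} (m : Fin (n + 1) → ℝ)
  {Sig : Matrix (Fin (n + 1)) (Fin (n + 1)) ℝ} {τ : ℝ → Measure (Fin (n + 1) → ℝ)}

lemma sDensity_eq_lintegral_hyperplaneChart (hd : stepLen t (Fin.last n) ≠ 0)
    (hτ : IsSurfaceMeasure t τ) (r : ℝ) :
    sDensity t m Sig τ r = ENNReal.ofReal (stepLen t (Fin.last n))⁻¹ *
      ∫⁻ w, ENNReal.ofReal (logNormalDensity m Sig (hyperplaneChart (stepLen t) r w)) := by
  rw [sDensity_eq_sliceLaw_univ, sliceLaw_apply m Sig hd hτ r MeasurableSet.univ, indicator_univ]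

lemma sDensity_ne_top (ht : StrictMono t) (hSig : Sig.PosDef) (hτ : IsSurfaceMeasure t τ)
    (r : ℝ) : sDensity t m Sig τ r ≠ ∞ := by
  obtain ⟨C, hC⟩ := logNormalDensity_le m hSig
  have hd := stepLen_pos ht
  set slice := hyperplaneChart (stepLen t) r ⁻¹' posOrthant (n + 1)
  have hbound : ∀ w, ENNReal.ofReal (logNormalDensity m Sig (hyperplaneChart (stepLen t) r w)) ≤
      slice.indicator (fun _ => ENNReal.ofReal C) w := by
    intro w
    by_cases hw : w ∈ slice
    · simpa [hw] using ENNReal.ofReal_le_ofReal (hC _)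
    · rw [indicator_of_notMem hw, logNormalDensity_of_notMem m Sig hw, ofReal_zero]
  rw [sDensity_eq_lintegral_hyperplaneChart m (hd _).ne' hτ]
  refine mul_ne_top ofReal_ne_top (ne_top_of_le_ne_top ?_ (lintegral_mono hbound))
  rw [lintegral_indicator_const
    ((isOpen_posOrthant _).measurableSet.preimage (continuous_hyperplaneChart _ r).measurable)]
  exact mul_ne_top ofReal_ne_top (volume_hyperplaneChart_preimage_posOrthant_lt_top hd r).ne

lemma sDensity_ne_zero (ht : StrictMono t) (hSig : Sig.PosDef) (hτ : IsSurfaceMeasure t τ)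
    {r : ℝ} (hr : 0 < r) : sDensity t m Sig τ r ≠ 0 := by
  have hd := stepLen_pos ht
  have hchart := continuous_hyperplaneChart (stepLen t) r
  rw [sDensity_eq_lintegral_hyperplaneChart m (hd _).ne' hτ]
  refine mul_ne_zero (by simpa using hd _) ((lintegral_pos_iff_support
    ((measurable_logNormalDensity m Sig).ennreal_ofReal.comp hchart.measurable)).2 ?_).ne'
  refine (((isOpen_posOrthant _).preimage hchart).measure_pos volume
    (hyperplaneChart_preimage_posOrthant_nonempty hd hr)).trans_le (measure_mono fun w hw => ?_)
  simpa using logNormalDensity_pos m hSig hw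

lemma setLIntegral_condLaw (ht : StrictMono t) (hSig : Sig.PosDef) (hτ : IsSurfaceMeasure t τ)
    {A : Set (Fin (n + 1) → ℝ)} {B : Set ℝ} (hA : MeasurableSet A) (hB : MeasurableSet B) :
    ∫⁻ r in B, condLaw t m Sig τ r A ∂(volume.withDensity (sDensity t m Sig τ)) =
      ∫⁻ r in B, sliceLaw t m Sig τ r A := by
  have hd := (stepLen_pos ht (Fin.last n)).ne'
  have hs : Measurable (sDensity t m Sig τ) := by
    simpa only [← sDensity_eq_sliceLaw_univ] using
      measurable_sliceLaw_apply m Sig hd hτ MeasurableSet.univ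
  have hcond : Measurable fun r => sliceLaw t m Sig τ r A / sDensity t m Sig τ r :=
    (measurable_sliceLaw_apply m Sig hd hτ hA).div hs
  simp_rw [condLaw_apply _ _ _ _ _ hA]
  rw [setLIntegral_withDensity_eq_setLIntegral_mul _ hs hcond hB]
  refine setLIntegral_congr_fun hB fun r _ => ENNReal.mul_div_cancel' (fun h0 => ?_)
    (fun htop => absurd htop (sDensity_ne_top m ht hSig hτ r))
  rw [← nonpos_iff_eq_zero, ← h0, sDensity_eq_sliceLaw_univ]
  exact measure_mono (subset_univ A)

end Normalizer

theorem simple_random_densities_stmt7_general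
    (k : ℕ) (hk : 0 < k) (t : Fin (k + 1) → ℝ) (ht : StrictMono t)
    (m : Fin k → ℝ) (Sig : Matrix (Fin k) (Fin k) ℝ) (hSig : Sig.PosDef)
    {Ω : Type*} [MeasurableSpace Ω] (P : Measure Ω)
    (U : Ω → Fin k → ℝ) (hU : Measurable U)
    (hlaw : Measure.map U P = volume.withDensity fun u => ENNReal.ofReal (logNormalDensity m Sig u))
    (τ : ℝ → Measure (Fin k → ℝ))
    (hτ : ∀ r : ℝ, ∀ A : Set (Fin k → ℝ), MeasurableSet A →
      τ r A = ENNReal.ofReal (dLast hk t)⁻¹ * volume (projFirst '' (A ∩ Hset t r))) :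
    (∀ (A : Set (Fin k → ℝ)) (B : Set ℝ), MeasurableSet A → MeasurableSet B →
      Measure.map (fun ω => (U ω, Sdelta t (U ω))) P (A ×ˢ B) =
        ∫⁻ r in B, condLaw t m Sig τ r A ∂(Measure.map (fun ω => Sdelta t (U ω)) P)) ∧
    (∀ r : ℝ, 0 < r → condLaw t m Sig τ r (Hset t r) = 1) := by
  obtain ⟨n, rfl⟩ := Nat.exists_eq_add_one_of_ne_zero hk.ne'
  have hτ' : IsSurfaceMeasure t τ := hτ
  have hd := stepLen_pos ht (Fin.last n)
  have hS := measurable_Sdelta t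
  have hmapS : P.map (fun ω => Sdelta t (U ω)) = volume.withDensity (sDensity t m Sig τ) := by
    rw [← Function.comp_def, ← Measure.map_map hS hU, hlaw,
      map_Sdelta_withDensity_logNormalDensity m Sig hd hτ']
  refine ⟨fun A B hA hB => ?_, fun r hr => ?_⟩
  · rw [hmapS, setLIntegral_condLaw m ht hSig hτ' hA hB,
      ← withDensity_logNormalDensity_inter_preimage_Sdelta m Sig hd hτ' hA hB, ← hlaw,
      Measure.map_apply hU (hA.inter (hS hB)),
      Measure.map_apply (hU.prodMk (hS.comp hU) :
        Measurable fun ω => (U ω, Sdelta t (U ω))) (hA.prod hB)]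
    rfl
  · rw [condLaw_apply _ _ _ _ _ (measurableSet_Hset t r), sliceLaw_Hset]
    exact ENNReal.div_self (sDensity_ne_zero m ht hSig hτ' hr) (sDensity_ne_top m ht hSig hτ' r)

/-- `μ_{U∣S_Δ(U)}` is a regular version of the conditional distribution of `U`
given `S_Δ(U)`: for all Borel `A ⊆ ℝ^k` and `B ⊆ ℝ`,
`P(U ∈ A, S_Δ(U) ∈ B) = ∫_B μ_{U∣S_Δ(U)}(A ∣ r) dμ_{S_Δ(U)}(r)`;
moreover `μ_{U∣S_Δ(U)}(ℍ_r ∣ r) = 1` for every `r > 0`. -/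
theorem simple_random_densities_stmt7
    (k : ℕ) (hk : 0 < k) (t : Fin (k + 1) → ℝ) (ht : StrictMono t)
    (m : Fin k → ℝ) (Sig : Matrix (Fin k) (Fin k) ℝ) (hSig : Sig.PosDef)
    {Ω : Type*} [MeasurableSpace Ω] (P : Measure Ω) [IsProbabilityMeasure P]
    (U : Ω → Fin k → ℝ) (hU : Measurable U)
    (hlaw : Measure.map U P = volume.withDensity fun u => ENNReal.ofReal (logNormalDensity m Sig u))
    (τ : ℝ → Measure (Fin k → ℝ))
    (hτ : ∀ r : ℝ, ∀ A : Set (Fin k → ℝ), MeasurableSet A →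
      τ r A = ENNReal.ofReal (dLast hk t)⁻¹ * volume (projFirst '' (A ∩ Hset t r))) :
    (∀ (A : Set (Fin k → ℝ)) (B : Set ℝ), MeasurableSet A → MeasurableSet B →
      Measure.map (fun ω => (U ω, Sdelta t (U ω))) P (A ×ˢ B) =
        ∫⁻ r in B, condLaw t m Sig τ r A ∂(Measure.map (fun ω => Sdelta t (U ω)) P)) ∧
    (∀ r : ℝ, 0 < r → condLaw t m Sig τ r (Hset t r) = 1) :=
  simple_random_densities_stmt7_general k hk t ht m Sig hSig P U hU hlaw τ hτ
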